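/- arXiv:1308.2532 — 4 statements merged into one kernel-verified Lean document; each statement's English description precedes it below -/
import Mathlib

section
/- Let r, K, mu1, mu2, b2 > 0, and let g, h : ℝ × ℝ → ℝ and delta : ℝ × ℝ → ℝ be continuously differentiable. Define F : ℝ³ → ℝ³ by F(R,P1,P2) = ( r·(1−R/K)·R − g(R,P2)·delta(P1,P2), −mu1·P1, b2·h(R,P2)·P2 − mu2·P2 ). Then the (complex) eigenvalues of the Jacobian matrix of F at the point (K,0,0) are exactly −r − (∂g/∂R)(K,0)·delta(0,0), −mu1, and b2·h(K,0) − mu2. In particular, if (∂g/∂R)(K,0)·delta(0,0) ≥ 0 and mu2 > b2·h(K,0), then all eigenvalues of the Jacobian at (K,0,0) have negative real part. -/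
/-!
At the prey-only equilibrium the predator densities vanish, so the predator rows of the
Jacobian reduce to their diagonal entries `-mu1` and `b2 h(K,0) - mu2`. The Jacobian is
therefore upper triangular, and its spectrum is the set of its diagonal entries.
-/

open ContinuousLinearMap

theorem Matrix.spectrum_eq_range_diag_of_isUpperTriangular {K n : Type*} [Field K] [Fintype n]
    [DecidableEq n] [LinearOrder n] {A : Matrix n n K} (hA : A.IsUpperTriangular) :
    spectrum K A = Set.range A.diag := by
  ext z
  simp [Matrix.mem_spectrum_iff_isRoot_charpoly, Matrix.charpoly_of_isUpperTriangular A hA,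
    Polynomial.eval_prod, Finset.prod_eq_zero_iff, sub_eq_zero, eq_comm (a := z)]

theorem hasDerivAt_logistic_at_capacity (r : ℝ) {K : ℝ} (hK : K ≠ 0) :
    HasDerivAt (fun t => r * (1 - t / K) * t) (-r) K := by
  refine ((((hasDerivAt_id K).div_const K).const_sub 1).const_mul r).fun_mul (hasDerivAt_id K)
    |>.congr_deriv ?_
  simp only [id]
  field_simp
  ring

noncomputable def preyPredatorField (r K mu1 mu2 b2 : ℝ) (g h delta : ℝ × ℝ → ℝ)
    (x : Fin 3 → ℝ) : Fin 3 → ℝ :=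
  ![r * (1 - x 0 / K) * x 0 - g (x 0, x 2) * delta (x 1, x 2),
    -mu1 * x 1,
    b2 * h (x 0, x 2) * x 2 - mu2 * x 2]

theorem toMatrix'_fderiv_preyPredatorField (r mu1 mu2 b2 : ℝ) {K : ℝ} (hK : K ≠ 0)
    {g h delta : ℝ × ℝ → ℝ} (hg : DifferentiableAt ℝ g (K, 0))
    (hh : DifferentiableAt ℝ h (K, 0)) (hdelta : DifferentiableAt ℝ delta (0, 0)) :
    LinearMap.toMatrix' (fderiv ℝ (preyPredatorField r K mu1 mu2 b2 g h delta) ![K, 0, 0] :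
        (Fin 3 → ℝ) →ₗ[ℝ] Fin 3 → ℝ) =
      !![-r - fderiv ℝ g (K, 0) (1, 0) * delta (0, 0),
          -(g (K, 0) * fderiv ℝ delta (0, 0) (1, 0)),
          -(g (K, 0) * fderiv ℝ delta (0, 0) (0, 1) + delta (0, 0) * fderiv ℝ g (K, 0) (0, 1));
        0, -mu1, 0;
        0, 0, b2 * h (K, 0) - mu2] := by
  set p : Fin 3 → ℝ := ![K, 0, 0]
  let π (i : Fin 3) : (Fin 3 → ℝ) →L[ℝ] ℝ := proj i
  have hπ (i : Fin 3) : HasFDerivAt (fun x : Fin 3 → ℝ => x i) (π i) p := (π i).hasFDerivAt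
  have hg' : HasFDerivAt (fun x : Fin 3 → ℝ => g (x 0, x 2))
      ((fderiv ℝ g (K, 0)).comp ((π 0).prod (π 2))) p :=
    hg.hasFDerivAt.comp p ((hπ 0).prodMk (hπ 2))
  have hh' : HasFDerivAt (fun x : Fin 3 → ℝ => h (x 0, x 2))
      ((fderiv ℝ h (K, 0)).comp ((π 0).prod (π 2))) p :=
    hh.hasFDerivAt.comp p ((hπ 0).prodMk (hπ 2))
  have hdelta' : HasFDerivAt (fun x : Fin 3 → ℝ => delta (x 1, x 2))
      ((fderiv ℝ delta (0, 0)).comp ((π 1).prod (π 2))) p :=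
    hdelta.hasFDerivAt.comp p ((hπ 1).prodMk (hπ 2))
  have hF : HasFDerivAt (preyPredatorField r K mu1 mu2 b2 g h delta)
      (pi ![(-r) • π 0 - (g (K, 0) • (fderiv ℝ delta (0, 0)).comp ((π 1).prod (π 2))
          + delta (0, 0) • (fderiv ℝ g (K, 0)).comp ((π 0).prod (π 2))),
        (-mu1) • π 1,
        (b2 * h (K, 0)) • π 2 + (0 : ℝ) • b2 • (fderiv ℝ h (K, 0)).comp ((π 0).prod (π 2))
          - mu2 • π 2]) p := by
    rw [hasFDerivAt_pi']
    intro i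
    fin_cases i
    · exact ((hasDerivAt_logistic_at_capacity r hK).comp_hasFDerivAt p (hπ 0)).sub
        (hg'.mul hdelta')
    · exact (hπ 1).const_mul (-mu1)
    · exact ((hh'.const_mul b2).mul (hπ 2)).sub ((hπ 2).const_mul mu2)
  rw [hF.fderiv]
  ext i j
  fin_cases i <;> fin_cases j <;>
    simp [LinearMap.toMatrix'_apply, π, Prod.mk_zero_zero, mul_comm]

theorem prey_only_equilibrium_jacobian_spectrum_general
    (r K mu1 mu2 b2 : ℝ) (hr : 0 < r) (hK : 0 < K) (hmu1 : 0 < mu1)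
    (g h delta : ℝ × ℝ → ℝ)
    (hg : ContDiff ℝ 1 g) (hh : ContDiff ℝ 1 h) (hdelta : ContDiff ℝ 1 delta)
    (F : (Fin 3 → ℝ) → (Fin 3 → ℝ))
    (hF : ∀ x, F x = ![r * (1 - x 0 / K) * x 0 - g (x 0, x 2) * delta (x 1, x 2),
                       -mu1 * x 1,
                       b2 * h (x 0, x 2) * x 2 - mu2 * x 2])
    (J : Matrix (Fin 3) (Fin 3) ℝ)
    (hJ : ∀ i j, J i j = fderiv ℝ F ![K, 0, 0] (Pi.single j 1) i)
    (gR : ℝ × ℝ → ℝ) (hgR : ∀ q, gR q = fderiv ℝ g q (1, 0)) :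
    spectrum ℂ (J.map (algebraMap ℝ ℂ))
      = {((-r - gR (K, 0) * delta (0, 0) : ℝ) : ℂ), ((-mu1 : ℝ) : ℂ),
         ((b2 * h (K, 0) - mu2 : ℝ) : ℂ)} ∧
    ((0 ≤ gR (K, 0) * delta (0, 0) ∧ b2 * h (K, 0) < mu2) →
      ∀ z ∈ spectrum ℂ (J.map (algebraMap ℝ ℂ)), z.re < 0) := by
  obtain rfl : F = preyPredatorField r K mu1 mu2 b2 g h delta := funext hF
  have hJ_eq : J = !![-r - gR (K, 0) * delta (0, 0),
          -(g (K, 0) * fderiv ℝ delta (0, 0) (1, 0)),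
          -(g (K, 0) * fderiv ℝ delta (0, 0) (0, 1) + delta (0, 0) * fderiv ℝ g (K, 0) (0, 1));
        0, -mu1, 0;
        0, 0, b2 * h (K, 0) - mu2] := by
    rw [hgR, ← toMatrix'_fderiv_preyPredatorField r mu1 mu2 b2 hK.ne'
      (hg.differentiable one_ne_zero _) (hh.differentiable one_ne_zero _)
      (hdelta.differentiable one_ne_zero _)]
    ext i j
    rw [hJ, LinearMap.toMatrix'_apply]
    rfl
  have hJ_upper : J.IsUpperTriangular := by
    rw [hJ_eq]
    intro i j hji
    fin_cases i <;> fin_cases j <;> first | rfl | simp at hji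
  have hspec : spectrum ℂ (J.map (algebraMap ℝ ℂ))
      = {((-r - gR (K, 0) * delta (0, 0) : ℝ) : ℂ), ((-mu1 : ℝ) : ℂ),
         ((b2 * h (K, 0) - mu2 : ℝ) : ℂ)} := by
    rw [Matrix.spectrum_eq_range_diag_of_isUpperTriangular (hJ_upper.map _)]
    ext z
    simp [Fin.exists_fin_succ, eq_comm, hJ_eq]
  refine ⟨hspec, ?_⟩
  rintro ⟨hgR_nonneg, hgrowth⟩ z hz
  rw [hspec] at hz
  rcases hz with rfl | rfl | rfl <;> simp only [Complex.ofReal_re] <;> linarith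

/-- Eigenvalues of the Jacobian of the τ = 0 predator–prey vector field at the
    prey-only equilibrium `(K,0,0)` are exactly `−r − g_R(K,0)·δ(0,0)`, `−μ₁`
    and `b₂ h(K,0) − μ₂`; in particular if `g_R(K,0)·δ(0,0) ≥ 0` and
    `μ₂ > b₂ h(K,0)` all eigenvalues have negative real part. -/
theorem prey_only_equilibrium_jacobian_spectrum
    (r K mu1 mu2 b2 : ℝ) (hr : 0 < r) (hK : 0 < K) (hmu1 : 0 < mu1)
    (hmu2 : 0 < mu2) (hb2 : 0 < b2)
    (g h delta : ℝ × ℝ → ℝ)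
    (hg : ContDiff ℝ 1 g) (hh : ContDiff ℝ 1 h) (hdelta : ContDiff ℝ 1 delta)
    (F : (Fin 3 → ℝ) → (Fin 3 → ℝ))
    (hF : ∀ x, F x = ![r * (1 - x 0 / K) * x 0 - g (x 0, x 2) * delta (x 1, x 2),
                       -mu1 * x 1,
                       b2 * h (x 0, x 2) * x 2 - mu2 * x 2])
    (J : Matrix (Fin 3) (Fin 3) ℝ)
    (hJ : ∀ i j, J i j = fderiv ℝ F ![K, 0, 0] (Pi.single j 1) i)
    (gR : ℝ × ℝ → ℝ) (hgR : ∀ q, gR q = fderiv ℝ g q (1, 0)) :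
    spectrum ℂ (J.map (algebraMap ℝ ℂ))
      = {((-r - gR (K, 0) * delta (0, 0) : ℝ) : ℂ), ((-mu1 : ℝ) : ℂ),
         ((b2 * h (K, 0) - mu2 : ℝ) : ℂ)} ∧
    ((0 ≤ gR (K, 0) * delta (0, 0) ∧ b2 * h (K, 0) < mu2) →
      ∀ z ∈ spectrum ℂ (J.map (algebraMap ℝ ℂ)), z.re < 0) :=
  prey_only_equilibrium_jacobian_spectrum_general r K mu1 mu2 b2 hr hK hmu1 g h delta hg hh hdelta F
    hF J hJ gR hgR
end

section
/- Let a ∈ ℝ, b > 0 and tau > 0. Then there exists a unique real number lambda0 satisfying lambda0 = a + b·e^{−tau·lambda0}, and every complex number z satisfying z = a + b·e^{−tau·z} has Re(z) ≤ lambda0. -/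
/-- The transcendental characteristic equation `λ = a + b e^{−τλ}` with `b > 0`,
    `τ > 0` has a unique real root, and this real root dominates the real part
    of every complex root. -/
theorem real_dominant_characteristic_root
    (a b tau : ℝ) (hb : 0 < b) (htau : 0 < tau) :
    (∃! l : ℝ, l = a + b * Real.exp (-tau * l)) ∧
    (∀ l : ℝ, l = a + b * Real.exp (-tau * l) →
      ∀ z : ℂ, z = (a : ℂ) + (b : ℂ) * Complex.exp (-(tau : ℂ) * z) →
        z.re ≤ l) := by
  set g : ℝ → ℝ := fun l => l - b * Real.exp (-tau * l) with hg
  have hmono : StrictMono g := by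
    intro x y hxy
    have hexp : Real.exp (-tau * y) < Real.exp (-tau * x) := by
      apply Real.exp_lt_exp.2
      nlinarith
    simp only [hg]
    nlinarith
  have hcont : Continuous g := by
    continuity
  -- existence of a real root
  have hroot : ∃ l : ℝ, g l = a := by
    -- choose endpoints
    set l2 : ℝ := max 0 (a + b) with hl2
    have h2 : a ≤ g l2 := by
      have h0 : (0:ℝ) ≤ l2 := le_max_left _ _
      have hab : a + b ≤ l2 := le_max_right _ _
      have he : Real.exp (-tau * l2) ≤ 1 := by
        apply Real.exp_le_one_iff.2
        nlinarith
      simp only [hg]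
      nlinarith
    set l1 : ℝ := min a l2 with hl1
    have h1 : g l1 ≤ a := by
      have ha : l1 ≤ a := min_le_left _ _
      have he : 0 < Real.exp (-tau * l1) := Real.exp_pos _
      simp only [hg]
      nlinarith
    have h12 : l1 ≤ l2 := min_le_right _ _
    have := intermediate_value_Icc h12 hcont.continuousOn
    have hmem : a ∈ Set.Icc (g l1) (g l2) := ⟨h1, h2⟩
    obtain ⟨l, _, hl⟩ := this hmem
    exact ⟨l, hl⟩
  obtain ⟨l0, hl0⟩ := hroot
  constructor
  · refine ⟨l0, ?_, ?_⟩
    · simp only [hg] at hl0; linarith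
    · intro y hy
      have : g y = a := by simp only [hg]; linarith
      exact hmono.injective (this.trans hl0.symm)
  · intro l hl z hz
    have hgl : g l = a := by simp only [hg]; linarith
    have hre : z.re = a + b * (Real.exp (-tau * z.re) * Real.cos (-tau * z.im)) := by
      have := congrArg Complex.re hz
      simpa [Complex.exp_re, Complex.add_re, Complex.mul_re, Complex.ofReal_re,
        Complex.ofReal_im, Complex.neg_re, Complex.neg_im, Complex.mul_im] using this
    have hcos : Real.cos (-tau * z.im) ≤ 1 := Real.cos_le_one _
    have hexp : 0 < Real.exp (-tau * z.re) := Real.exp_pos _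
    have : g z.re ≤ a := by
      simp only [hg]
      nlinarith [mul_le_mul_of_nonneg_left hcos hexp.le,
        mul_le_mul_of_nonneg_left (mul_le_mul_of_nonneg_left hcos hexp.le) hb.le]
    have : g z.re ≤ g l := by rw [hgl]; exact this
    exact hmono.le_iff_le.mp this
end

section
/- Let K, b, mu, mu1 > 0, let tau ≥ 0 and set x = e^{mu1·tau}; assume b > mu·x. Define beta = 2·mu/(K·(b·e^{−mu1·tau} − mu)) − x·(mu/b + mu/(K·b)) and eps = mu·x·(1 − x·(mu/b + mu/(K·b))). Then eps − 2·mu·x·beta > 0 if and only if x² + (3b/(mu·(1+K)))·x − K·b²/(mu²·(1+K)) < 0, and this holds if and only if x < x₊, where x₊ = −3b/(2·mu·(1+K)) + sqrt( 9b²/(4·mu²·(1+K)²) + K·b²/(mu²·(1+K)) ). Moreover x₊ > 0. -/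
set_option maxHeartbeats 1000000 in
/-- The stability-switch condition `ε − 2μxβ > 0` for the delayed
    Rosenzweig–MacArthur model, with `x = e^{μ₁τ}`, is equivalent to
    `x² + (3b/(μ(1+K)))x − Kb²/(μ²(1+K)) < 0`, i.e. to `x < x₊`, and `x₊ > 0`. -/
theorem rosenzweig_macarthur_switch_condition
    (K b mu mu1 tau : ℝ) (hK : 0 < K) (hb : 0 < b) (hmu : 0 < mu)
    (hmu1 : 0 < mu1) (htau : 0 ≤ tau)
    (x : ℝ) (hx : x = Real.exp (mu1 * tau)) (hbx : mu * x < b)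
    (beta eps xplus : ℝ)
    (hbeta : beta = 2 * mu / (K * (b * Real.exp (-mu1 * tau) - mu))
      - x * (mu / b + mu / (K * b)))
    (heps : eps = mu * x * (1 - x * (mu / b + mu / (K * b))))
    (hxplus : xplus = -(3 * b) / (2 * mu * (1 + K))
      + Real.sqrt (9 * b ^ 2 / (4 * mu ^ 2 * (1 + K) ^ 2)
          + K * b ^ 2 / (mu ^ 2 * (1 + K)))) :
    (0 < eps - 2 * mu * x * beta ↔
      x ^ 2 + (3 * b / (mu * (1 + K))) * x - K * b ^ 2 / (mu ^ 2 * (1 + K)) < 0) ∧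
    (x ^ 2 + (3 * b / (mu * (1 + K))) * x - K * b ^ 2 / (mu ^ 2 * (1 + K)) < 0 ↔
      x < xplus) ∧
    0 < xplus := by
  have hx0 : 0 < x := hx ▸ Real.exp_pos _
  have hexp : Real.exp (-mu1 * tau) = 1 / x := by
    rw [hx, neg_mul, Real.exp_neg, one_div]
  have hD : 0 < b - mu * x := by linarith
  have hKpos : 0 < 1 + K := by linarith
  -- rewrite eps - 2*mu*x*beta
  have heq : eps - 2 * mu * x * beta =
      mu * x * (K * b ^ 2 - 3 * mu * b * x - mu ^ 2 * (1 + K) * x ^ 2)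
        / (K * b * (b - mu * x)) := by
    rw [heps, hbeta, hexp]
    have h1 : b * (1 / x) - mu = (b - mu * x) / x := by field_simp
    rw [h1]
    field_simp
    ring
  have harg : 0 ≤ 9 * b ^ 2 / (4 * mu ^ 2 * (1 + K) ^ 2)
      + K * b ^ 2 / (mu ^ 2 * (1 + K)) := by positivity
  set s := Real.sqrt (9 * b ^ 2 / (4 * mu ^ 2 * (1 + K) ^ 2)
      + K * b ^ 2 / (mu ^ 2 * (1 + K))) with hs
  have hs0 : 0 ≤ s := Real.sqrt_nonneg _
  have hs2 : s ^ 2 = 9 * b ^ 2 / (4 * mu ^ 2 * (1 + K) ^ 2)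
      + K * b ^ 2 / (mu ^ 2 * (1 + K)) := Real.sq_sqrt harg
  have hs2' : s ^ 2 * (4 * mu ^ 2 * (1 + K) ^ 2)
      = 9 * b ^ 2 + 4 * K * b ^ 2 * (1 + K) := by
    rw [hs2]; field_simp
  have htnn : 0 ≤ s * (2 * mu * (1 + K)) := by positivity
  have htsq : (s * (2 * mu * (1 + K))) ^ 2 = 9 * b ^ 2 + 4 * K * b ^ 2 * (1 + K) := by
    linear_combination hs2'
  have hsb : 3 * b < s * (2 * mu * (1 + K)) := by
    nlinarith [htsq, htnn, mul_pos (mul_pos hK (pow_pos hb 2)) hKpos]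
  have hxp : xplus * (2 * mu * (1 + K)) = -(3 * b) + s * (2 * mu * (1 + K)) := by
    rw [hxplus]; field_simp
  have hxppos : 0 < xplus := by
    nlinarith [hxp, hsb, mul_pos hmu hKpos]
  -- relate the quadratic to the numerator
  have hPN : -(x ^ 2 + (3 * b / (mu * (1 + K))) * x - K * b ^ 2 / (mu ^ 2 * (1 + K)))
      = (K * b ^ 2 - 3 * mu * b * x - mu ^ 2 * (1 + K) * x ^ 2) / (mu ^ 2 * (1 + K)) := by
    field_simp; ring
  have hiff2 : x ^ 2 + (3 * b / (mu * (1 + K))) * x - K * b ^ 2 / (mu ^ 2 * (1 + K)) < 0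
      ↔ 0 < K * b ^ 2 - 3 * mu * b * x - mu ^ 2 * (1 + K) * x ^ 2 := by
    rw [← neg_pos, hPN, div_pos_iff_of_pos_right (by positivity)]
  refine ⟨?_, ?_, hxppos⟩
  · rw [heq, div_pos_iff_of_pos_right (by positivity),
      mul_pos_iff_of_pos_left (by positivity : (0:ℝ) < mu * x), hiff2]
  · rw [hiff2]
    constructor
    · intro hN
      by_contra hcon
      push_neg at hcon
      have h1 : xplus * (2 * mu * (1 + K)) ≤ x * (2 * mu * (1 + K)) := by
        nlinarith [mul_pos hmu hKpos]
      nlinarith [mul_nonneg (sub_nonneg.mpr h1) (by positivity :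
          (0:ℝ) ≤ x * (2 * mu * (1 + K)) + 3 * b + s * (2 * mu * (1 + K))),
        hxp, htsq, hN]
    · intro h
      have h1 : x * (2 * mu * (1 + K)) < xplus * (2 * mu * (1 + K)) := by
        nlinarith [mul_pos hmu hKpos]
      have hf1 : x * (2 * mu * (1 + K)) + 3 * b - s * (2 * mu * (1 + K)) < 0 := by
        rw [hxp] at h1; linarith
      have hf2 : 0 < x * (2 * mu * (1 + K)) + 3 * b + s * (2 * mu * (1 + K)) := by
        positivity
      nlinarith [mul_neg_of_neg_of_pos hf1 hf2, htsq]
end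

section
/- Let tau ≥ 0 and K, b, mu, mu1 > 0. Suppose R, P2 : [−tau, ∞) → ℝ are continuous, differentiable on (0,∞), nonnegative on [−tau, 0], and satisfy for all t > 0: R'(t) = R(t)·(1 − R(t)/K) − b·R(t)·P2(t)/(1 + R(t)) and P2'(t) = −mu·P2(t) + b·e^{−mu1·tau}·R(t−tau)·P2(t−tau)/(1 + R(t−tau)). Then R(t) ≥ 0 and P2(t) ≥ 0 for all t ≥ 0. -/
/-!
The prey equation has the form `R' = h R`, with a coefficient `h` that is continuous at every
zero of `R` (there `1 + R = 1`). Near such a zero `h` is bounded above, so `exp (-2 L t) R²` is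
nonincreasing and `R` stays zero; by continuous induction `R` never becomes negative. For the
predator with `τ > 0` the delayed feeding term is nonnegative as long as `P2` was nonnegative one
delay earlier, so `P2' ≥ -μ P2` on each interval `[n τ, (n + 1) τ]` (method of steps); for `τ = 0`
the predator equation is again of the form `P2' = h P2`.
-/

open Set Filter Topology

theorem eqOn_zero_of_hasDerivAt_mul {f h : ℝ → ℝ} {a b L : ℝ}
    (hf : ContinuousOn f (Icc a b)) (hderiv : ∀ t ∈ Ioo a b, HasDerivAt f (h t * f t) t)
    (hL : ∀ t ∈ Ioo a b, h t ≤ L) (ha : f a = 0) : EqOn f 0 (Icc a b) := by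
  let g : ℝ → ℝ := fun t => Real.exp (-(2 * L) * t) * f t ^ 2
  have hg : ∀ t ∈ interior (Icc a b),
      HasDerivAt g (2 * Real.exp (-(2 * L) * t) * f t ^ 2 * (h t - L)) t := fun t ht => by
    rw [interior_Icc] at ht
    refine (((hasDerivAt_id' t).const_mul (-(2 * L))).exp.fun_mul
      ((hderiv t ht).fun_pow 2)).congr_deriv ?_
    ring
  have hanti : AntitoneOn g (Icc a b) := by
    refine antitoneOn_of_hasDerivWithinAt_nonpos (convex_Icc a b) ?_
      (fun t ht => (hg t ht).hasDerivWithinAt) fun t ht => ?_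
    · exact ((continuous_const.mul continuous_id).rexp.continuousOn).mul (hf.pow 2)
    · rw [interior_Icc] at ht
      have : 0 ≤ 2 * Real.exp (-(2 * L) * t) * f t ^ 2 := by positivity
      exact mul_nonpos_of_nonneg_of_nonpos this (sub_nonpos.2 (hL t ht))
  intro t ht
  have hg_nonpos : g t ≤ 0 := by
    simpa [g, ha] using hanti (left_mem_Icc.2 (ht.1.trans ht.2)) ht ht.1
  have hsq : f t ^ 2 ≤ 0 := nonpos_of_mul_nonpos_right hg_nonpos (Real.exp_pos _)
  simpa using le_antisymm hsq (sq_nonneg _)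

theorem nonneg_of_hasDerivAt_mul {f h : ℝ → ℝ} {a : ℝ}
    (hf : ContinuousOn f (Ici a))
    (hh : ∀ x ≥ a, f x = 0 → ContinuousWithinAt h (Ici a) x)
    (hderiv : ∀ t > a, HasDerivAt f (h t * f t) t) (ha : 0 ≤ f a) :
    ∀ t ≥ a, 0 ≤ f t := by
  have step : ∀ x ≥ a, 0 ≤ f x → ∀ᶠ t in 𝓝[>] x, 0 ≤ f t := by
    intro x hx hfx
    have hle : 𝓝[>] x ≤ 𝓝[Ici a] x := nhdsWithin_mono _ (Ioi_subset_Ici hx)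
    rcases hfx.lt_or_eq with hpos | hzero
    · exact (((hf x hx).eventually (lt_mem_nhds hpos)).filter_mono hle).mono fun _ => le_of_lt
    · obtain ⟨c, hxc, hc⟩ := mem_nhdsGT_iff_exists_Ioo_subset.1
        (((hh x hx hzero.symm).eventually (gt_mem_nhds (lt_add_one (h x)))).filter_mono hle)
      have hzero_on : EqOn f 0 (Icc x c) :=
        eqOn_zero_of_hasDerivAt_mul (hf.mono fun t ht => hx.trans ht.1)
          (fun t ht => hderiv t (hx.trans_lt ht.1)) (fun t ht => (hc ht).le) hzero.symm
      filter_upwards [Ioo_mem_nhdsGT hxc] with t ht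
      exact (hzero_on (Ioo_subset_Icc_self ht)).ge
  intro t ht
  have hclosed : IsClosed ({s | 0 ≤ f s} ∩ Icc a t) := by
    rw [inter_comm]
    exact (hf.mono Icc_subset_Ici_self).preimage_isClosed_of_isClosed isClosed_Icc isClosed_Ici
  exact hclosed.Icc_subset_of_forall_mem_nhdsWithin ha (fun x hx => step x hx.2.1 hx.1)
    (right_mem_Icc.2 ht)

theorem nonneg_of_neg_mul_le_deriv {f f' : ℝ → ℝ} {μ a b : ℝ}
    (hf : ContinuousOn f (Icc a b)) (hderiv : ∀ t ∈ Ioo a b, HasDerivAt f (f' t) t)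
    (hbound : ∀ t ∈ Ioo a b, -μ * f t ≤ f' t) (ha : 0 ≤ f a) : ∀ t ∈ Icc a b, 0 ≤ f t := by
  let g : ℝ → ℝ := fun t => Real.exp (μ * t) * f t
  have hg : ∀ t ∈ interior (Icc a b),
      HasDerivAt g (Real.exp (μ * t) * (μ * f t + f' t)) t := fun t ht => by
    rw [interior_Icc] at ht
    refine (((hasDerivAt_id' t).const_mul μ).exp.fun_mul (hderiv t ht)).congr_deriv ?_
    ring
  have hmono : MonotoneOn g (Icc a b) := by
    refine monotoneOn_of_hasDerivWithinAt_nonneg (convex_Icc a b) ?_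
      (fun t ht => (hg t ht).hasDerivWithinAt) fun t ht => ?_
    · exact ((continuous_const.mul continuous_id).rexp.continuousOn).mul hf
    · rw [interior_Icc] at ht
      have := hbound t ht
      exact mul_nonneg (Real.exp_pos _).le (by linarith)
  intro t ht
  have hg_nonneg : 0 ≤ g t :=
    (mul_nonneg (Real.exp_pos _).le ha).trans (hmono (left_mem_Icc.2 (ht.1.trans ht.2)) ht ht.1)
  exact nonneg_of_mul_nonneg_right hg_nonneg (Real.exp_pos _)

theorem nonneg_of_neg_mul_le_deriv_of_delayed_nonneg {f f' : ℝ → ℝ} {μ τ : ℝ} (hτ : 0 < τ)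
    (hf : ContinuousOn f (Ici (-τ))) (hinit : ∀ t ∈ Icc (-τ) 0, 0 ≤ f t)
    (hderiv : ∀ t > 0, HasDerivAt f (f' t) t)
    (hbound : ∀ t > 0, 0 ≤ f (t - τ) → -μ * f t ≤ f' t) : ∀ t ≥ -τ, 0 ≤ f t := by
  -- On `[n τ, (n + 1) τ]` the delayed argument lies in `[-τ, n τ]`.
  have hsteps : ∀ n : ℕ, ∀ t ∈ Icc (-τ) (n * τ), 0 ≤ f t := by
    intro n
    induction n with
    | zero => simpa using hinit
    | succ n ih =>
      have hnτ : 0 ≤ n * τ := by positivity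
      intro t ht
      rcases le_or_gt t (n * τ) with htn | htn
      · exact ih t ⟨ht.1, htn⟩
      refine nonneg_of_neg_mul_le_deriv (μ := μ) (a := n * τ) (b := (n + 1) * τ)
        (hf.mono fun s hs => mem_Ici.2 (by linarith [hs.1]))
        (fun s hs => hderiv s (hnτ.trans_lt hs.1))
        (fun s hs => hbound s (hnτ.trans_lt hs.1) (ih _ ⟨by linarith [hs.1], by linarith [hs.2]⟩))
        (ih _ ⟨by linarith, le_rfl⟩) t ⟨htn.le, by push_cast at ht; linarith [ht.2]⟩
  intro t ht
  obtain ⟨n, hn⟩ := exists_nat_ge (t / τ)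
  exact hsteps n t ⟨ht, (div_le_iff₀ hτ).1 hn⟩

theorem delayed_rosenzweig_macarthur_positivity_general
    (tau K b mu mu1 : ℝ) (htau : 0 ≤ tau) (hb : 0 < b)
    (R P2 : ℝ → ℝ)
    (hRc : ContinuousOn R (Set.Ici (-tau)))
    (hPc : ContinuousOn P2 (Set.Ici (-tau)))
    (hRnn : ∀ t ∈ Set.Icc (-tau) (0:ℝ), 0 ≤ R t)
    (hPnn : ∀ t ∈ Set.Icc (-tau) (0:ℝ), 0 ≤ P2 t)
    (hR : ∀ t > (0:ℝ), HasDerivAt R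
      (R t * (1 - R t / K) - b * R t * P2 t / (1 + R t)) t)
    (hP : ∀ t > (0:ℝ), HasDerivAt P2
      (-mu * P2 t + b * Real.exp (-mu1 * tau) * R (t - tau) * P2 (t - tau)
        / (1 + R (t - tau))) t) :
    ∀ t ≥ (0:ℝ), 0 ≤ R t ∧ 0 ≤ P2 t := by
  have hIci : Ici 0 ⊆ Ici (-tau) := Ici_subset_Ici.2 (by linarith)
  have hR_nonneg : ∀ t ≥ -tau, 0 ≤ R t := by
    have hpos : ∀ t ≥ 0, 0 ≤ R t := by
      refine nonneg_of_hasDerivAt_mul (h := fun t => 1 - R t / K - b * P2 t / (1 + R t))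
        (hRc.mono hIci) (fun x hx hx0 => ?_) (fun t ht => (hR t ht).congr_deriv (by ring))
        (hRnn 0 ⟨by linarith, le_rfl⟩)
      have hRx := hRc.mono hIci x hx
      exact (continuousWithinAt_const.sub (hRx.div_const K)).sub
        ((continuousWithinAt_const.mul (hPc.mono hIci x hx)).div
          (continuousWithinAt_const.add hRx) (by simp [hx0]))
    exact fun t ht => (le_total t 0).elim (fun ht0 => hRnn t ⟨ht, ht0⟩) (hpos t)
  have hP_nonneg : ∀ t ≥ 0, 0 ≤ P2 t := by
    rcases htau.eq_or_lt with rfl | htau_pos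
    · refine nonneg_of_hasDerivAt_mul
        (h := fun t => -mu + b * Real.exp (-mu1 * 0) * R t / (1 + R t))
        (hPc.mono hIci) (fun x hx _ => ?_)
        (fun t ht => (hP t ht).congr_deriv (by simp only [sub_zero]; ring))
        (hPnn 0 ⟨by linarith, le_rfl⟩)
      have hRx := hRc.mono hIci x hx
      exact continuousWithinAt_const.add ((continuousWithinAt_const.mul hRx).div
        (continuousWithinAt_const.add hRx) (by linarith [hR_nonneg x (by linarith)]))
    · refine fun t ht => nonneg_of_neg_mul_le_deriv_of_delayed_nonneg (μ := mu) htau_pos hPc hPnn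
        hP (fun s hs hPs => ?_) t (by linarith)
      have hRs := hR_nonneg (s - tau) (by linarith)
      have hdelay : 0 ≤ b * Real.exp (-mu1 * tau) * R (s - tau) * P2 (s - tau)
          / (1 + R (s - tau)) := by positivity
      linarith
  exact fun t ht => ⟨hR_nonneg t (by linarith), hP_nonneg t ht⟩

/-- Positivity of solutions of the delayed Rosenzweig–MacArthur model:
    solutions with nonnegative continuous initial data on `[−τ,0]` remain
    nonnegative for all `t ≥ 0`. -/
theorem delayed_rosenzweig_macarthur_positivity
    (tau K b mu mu1 : ℝ) (htau : 0 ≤ tau) (hK : 0 < K) (hb : 0 < b)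
    (hmu : 0 < mu) (hmu1 : 0 < mu1)
    (R P2 : ℝ → ℝ)
    (hRc : ContinuousOn R (Set.Ici (-tau)))
    (hPc : ContinuousOn P2 (Set.Ici (-tau)))
    (hRnn : ∀ t ∈ Set.Icc (-tau) (0:ℝ), 0 ≤ R t)
    (hPnn : ∀ t ∈ Set.Icc (-tau) (0:ℝ), 0 ≤ P2 t)
    (hR : ∀ t > (0:ℝ), HasDerivAt R
      (R t * (1 - R t / K) - b * R t * P2 t / (1 + R t)) t)
    (hP : ∀ t > (0:ℝ), HasDerivAt P2
      (-mu * P2 t + b * Real.exp (-mu1 * tau) * R (t - tau) * P2 (t - tau)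
        / (1 + R (t - tau))) t) :
    ∀ t ≥ (0:ℝ), 0 ≤ R t ∧ 0 ≤ P2 t :=
  delayed_rosenzweig_macarthur_positivity_general tau K b mu mu1 htau hb R P2 hRc hPc hRnn hPnn hR
    hP
end
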